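/- arXiv:1211.5046 — 3 statements merged into one kernel-verified Lean document; each statement's English description precedes it below -/
import Mathlib

section
/- Let n ≥ 1 be a natural number, let Λ > 0, let T ∈ (0,∞], and let c be a real number with Λ < c. Let H : [0,T) → ℝ be differentiable with H(t) > 0 for all t ∈ [0,T), with H(0)² > n·c, and suppose the reciprocal v = H⁻¹ satisfies the differential inequality v'(t) ≤ -(1/n)·v(t) + Λ·v(t)³ for all t ∈ [0,T). Set ε = (1/n)·(1 - Λ/c). Then H(t) ≥ H(0)·e^{ε t} for all t ∈ [0,T). -/
open scoped ENNReal NNReal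

/-- scalar ODE content of Lemma 2.3.
Let `n ≥ 1`, `Λ > 0`, `T ∈ (0,∞]` and `Λ < c`.  Let `H` be a positive
differentiable function on `[0,T)` with `H(0)² > n·c`, whose reciprocal
`v = H⁻¹` has derivative `v'` satisfying `v'(t) ≤ -(1/n)·v(t) + Λ·v(t)³`
on `[0,T)`.  With `ε = (1/n)·(1 - Λ/c)` we have `H(t) ≥ H(0)·e^{εt}` on
`[0,T)`. -/
theorem stmt0 (n : ℕ) (hn : 1 ≤ n) (Λ : ℝ) (hΛ : 0 < Λ) (T : ℝ≥0∞) (hT : 0 < T)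
    (c : ℝ) (hc : Λ < c) (H v' : ℝ → ℝ)
    (hpos : ∀ t : ℝ, 0 ≤ t → ENNReal.ofReal t < T → 0 < H t)
    (hderiv : ∀ t : ℝ, 0 ≤ t → ENNReal.ofReal t < T →
      HasDerivWithinAt (fun s => (H s)⁻¹) (v' t)
        {s : ℝ | 0 ≤ s ∧ ENNReal.ofReal s < T} t)
    (h0 : (n : ℝ) * c < (H 0) ^ 2)
    (hineq : ∀ t : ℝ, 0 ≤ t → ENNReal.ofReal t < T →
      v' t ≤ -(1 / n) * (H t)⁻¹ + Λ * ((H t)⁻¹) ^ 3) :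
    ∀ t : ℝ, 0 ≤ t → ENNReal.ofReal t < T →
      H 0 * Real.exp ((1 / n) * (1 - Λ / c) * t) ≤ H t := by
  intro t ht htT
  set ε : ℝ := (1 / n) * (1 - Λ / c) with hεdef
  have hn' : (0:ℝ) < n := by exact_mod_cast hn
  have hc0 : (0:ℝ) < c := hΛ.trans hc
  have hε0 : 0 < ε := by
    have : Λ / c < 1 := (div_lt_one hc0).mpr hc
    have h1 : (0:ℝ) < 1 - Λ / c := by linarith
    positivity
  set D : Set ℝ := {s : ℝ | 0 ≤ s ∧ ENNReal.ofReal s < T} with hDdef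
  have h0D : (0:ℝ) ∈ D := ⟨le_refl _, by simpa using hT⟩
  have hIccD : Set.Icc 0 t ⊆ D := fun z hz =>
    ⟨hz.1, lt_of_le_of_lt (ENNReal.ofReal_le_ofReal hz.2) htT⟩
  set g : ℝ → ℝ := fun s => (H s)⁻¹ * Real.exp (ε * s) with hgdef
  have hgderiv : ∀ x ∈ D, HasDerivWithinAt g
      (v' x * Real.exp (ε * x) + (H x)⁻¹ * (Real.exp (ε * x) * ε)) D x := by
    intro x hx
    have h1 := hderiv x hx.1 hx.2
    have h2 : HasDerivAt (fun s : ℝ => Real.exp (ε * s)) (Real.exp (ε * x) * ε) x := by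
      have h := ((hasDerivAt_id x).const_mul ε)
      rw [mul_one] at h
      exact (Real.hasDerivAt_exp (ε * x)).comp x h
    exact h1.mul h2.hasDerivWithinAt
  have hgcont : ContinuousOn g D := fun x hx => (hgderiv x hx).continuousWithinAt
  have hH0 : 0 < H 0 := hpos 0 le_rfl (by simpa using hT)
  have hg0 : g 0 = (H 0)⁻¹ := by simp [hgdef]
  set S : Set ℝ := {s : ℝ | g s ≤ g 0} with hSdef
  have hsub : Set.Icc 0 t ⊆ S := by
    apply IsClosed.Icc_subset_of_forall_mem_nhdsWithin
    · have hSI : S ∩ Set.Icc 0 t = Set.Icc 0 t ∩ g ⁻¹' (Set.Iic (g 0)) := by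
        ext z; simp [hSdef, Set.mem_Iic, and_comm]
      rw [hSI]
      exact (hgcont.mono hIccD).preimage_isClosed_of_isClosed isClosed_Icc isClosed_Iic
    · simp [hSdef]
    · rintro x ⟨hxS, hx0, hxt⟩
      have hxD : x ∈ D := hIccD ⟨hx0, le_of_lt hxt⟩
      have hHx : 0 < H x := hpos x hxD.1 hxD.2
      have hvx : 0 < (H x)⁻¹ := inv_pos.mpr hHx
      -- from g x ≤ g 0 deduce (H x)⁻¹ ≤ (H 0)⁻¹
      have hexp1 : (1:ℝ) ≤ Real.exp (ε * x) := Real.one_le_exp (by positivity)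
      have hgx : (H x)⁻¹ * Real.exp (ε * x) ≤ (H 0)⁻¹ := by
        have := hxS
        simpa only [hSdef, Set.mem_setOf_eq, hg0] using this
      have hvle : (H x)⁻¹ ≤ (H 0)⁻¹ := by nlinarith [hvx.le]
      have hnc : 0 < (n:ℝ) * c := by positivity
      have hvsq : ((H x)⁻¹)^2 < ((n:ℝ) * c)⁻¹ := by
        have h1 : ((H x)⁻¹)^2 ≤ ((H 0)⁻¹)^2 := by nlinarith [hvx.le, inv_pos.mpr hH0]
        have h2 : ((H 0)⁻¹)^2 = ((H 0)^2)⁻¹ := by rw [← inv_pow]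
        have h3 : ((H 0)^2)⁻¹ < ((n:ℝ) * c)⁻¹ := by
          exact inv_strictAnti₀ hnc h0
        linarith [h1, h2 ▸ h1]
      -- derivative is negative at x
      have hv' : v' x < -ε * (H x)⁻¹ := by
        have h1 := hineq x hxD.1 hxD.2
        have h2 : Λ * ((H x)⁻¹)^3 < Λ * ((n:ℝ)*c)⁻¹ * (H x)⁻¹ := by
          have : ((H x)⁻¹)^3 = ((H x)⁻¹)^2 * (H x)⁻¹ := by ring
          rw [this]
          have := mul_lt_mul_of_pos_right hvsq hvx
          nlinarith
        have h3 : -ε = -(1/n) + Λ * ((n:ℝ)*c)⁻¹ := by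
          field_simp [hεdef]
          rw [hεdef]; field_simp <;> ring
        calc v' x ≤ -(1/n) * (H x)⁻¹ + Λ * ((H x)⁻¹)^3 := h1
          _ < -(1/n) * (H x)⁻¹ + Λ * ((n:ℝ)*c)⁻¹ * (H x)⁻¹ := by linarith
          _ = (-(1/n) + Λ * ((n:ℝ)*c)⁻¹) * (H x)⁻¹ := by ring
          _ = -ε * (H x)⁻¹ := by rw [← h3]
      have hd : v' x * Real.exp (ε * x) + (H x)⁻¹ * (Real.exp (ε * x) * ε) < 0 := by
        have hE : 0 < Real.exp (ε * x) := Real.exp_pos _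
        nlinarith
      -- slope argument
      have htend := hasDerivWithinAt_iff_tendsto_slope.mp (hgderiv x hxD)
      have hev : ∀ᶠ z in nhdsWithin x (D \ {x}), slope g x z < 0 :=
        htend.eventually_lt_const hd
      have hIooD : Set.Ioo x t ⊆ D \ {x} := by
        rintro z ⟨hz1, hz2⟩
        exact ⟨hIccD ⟨le_trans hx0 hz1.le, hz2.le⟩, by simp [ne_of_gt hz1]⟩
      have hIoo : Set.Ioo x t ∈ nhdsWithin x (Set.Ioi x) :=
        Ioo_mem_nhdsGT_of_mem ⟨le_refl x, hxt⟩
      have hle : nhdsWithin x (Set.Ioi x) ≤ nhdsWithin x (D \ {x}) :=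
        le_trans (nhdsWithin_le_of_mem hIoo) (nhdsWithin_mono x hIooD)
      have hev' : ∀ᶠ z in nhdsWithin x (Set.Ioi x), slope g x z < 0 := hle hev
      filter_upwards [hev', self_mem_nhdsWithin] with z h1 h2
      have hzx : 0 < z - x := sub_pos.mpr h2
      rw [slope_def_field] at h1
      have hgz : g z < g x := by
        have := (div_neg_iff.mp h1)
        rcases this with ⟨ha, hb⟩ | ⟨ha, hb⟩
        · linarith
        · linarith
      exact le_of_lt (lt_of_lt_of_le hgz hxS)
  have htS := hsub ⟨ht, le_refl t⟩
  have hHt : 0 < H t := hpos t ht htT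
  have hfin : (H t)⁻¹ * Real.exp (ε * t) ≤ (H 0)⁻¹ := by
    have := htS
    simpa only [hSdef, Set.mem_setOf_eq, hg0] using this
  have hE : 0 < Real.exp (ε * t) := Real.exp_pos _
  have h1 : (H t)⁻¹ * Real.exp (ε * t) * (H t * H 0) ≤ (H 0)⁻¹ * (H t * H 0) := by
    apply mul_le_mul_of_nonneg_right hfin (by positivity)
  have h2 : Real.exp (ε * t) * H 0 ≤ H t := by
    have e1 : (H t)⁻¹ * Real.exp (ε * t) * (H t * H 0)
        = Real.exp (ε * t) * H 0 * ((H t)⁻¹ * H t) := by ring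
    have e2 : (H 0)⁻¹ * (H t * H 0) = H t * ((H 0)⁻¹ * H 0) := by ring
    rw [e1, e2, inv_mul_cancel₀ hHt.ne', inv_mul_cancel₀ hH0.ne'] at h1
    simpa using h1
  calc H 0 * Real.exp ((1/n) * (1 - Λ/c) * t) = Real.exp (ε * t) * H 0 := by
        rw [hεdef]; ring
    _ ≤ H t := h2
end

section
/- Let n ≥ 1 be a natural number and let Λ > 0. Let H : [0,∞) → ℝ be differentiable with H(t) > 0 for all t ≥ 0, with H(0)² > n·Λ, and suppose the reciprocal v = H⁻¹ satisfies the differential inequality v'(t) ≤ -(1/n)·v(t) + Λ·v(t)³ for all t ≥ 0. Then there exists a constant c₀ > 0 (depending only on n, Λ and H(0)) such that H(t) ≥ c₀·e^{t/n} for all t ≥ 0. -/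
set_option maxHeartbeats 400000

open Set Real

/-- Fencing lemma on `[0, ∞)`. -/
lemma fence_Ici {f f' B B' : ℝ → ℝ}
    (hf : ∀ x ∈ Ici (0:ℝ), HasDerivWithinAt f (f' x) (Ici 0) x)
    (hB : ∀ x, HasDerivAt B (B' x) x)
    (ha : f 0 ≤ B 0)
    (bound : ∀ x, 0 ≤ x → f x = B x → f' x < B' x) :
    ∀ t, 0 ≤ t → f t ≤ B t := by
  intro t ht
  have hcont : ContinuousOn f (Icc 0 t) := fun x hx =>
    ((hf x hx.1).continuousWithinAt).mono (Icc_subset_Ici_self)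
  exact image_le_of_deriv_right_lt_deriv_boundary hcont
    (fun x hx => (hf x hx.1).mono (Ici_subset_Ici.2 hx.1)) ha hB
    (fun x hx => bound x hx.1) (Set.mem_Icc.2 ⟨ht, le_rfl⟩)

/-- scalar ODE content of Lemma 2.4.
Let `n ≥ 1` and `Λ > 0`.  Let `H` be a positive differentiable function on
`[0,∞)` with `H(0)² > n·Λ`, whose reciprocal `v = H⁻¹` has derivative `v'`
satisfying `v'(t) ≤ -(1/n)·v(t) + Λ·v(t)³` for all `t ≥ 0`.  Then there is a
constant `c₀ > 0` with `H(t) ≥ c₀·e^{t/n}` for all `t ≥ 0`. -/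
theorem stmt1 (n : ℕ) (hn : 1 ≤ n) (Λ : ℝ) (hΛ : 0 < Λ) (H v' : ℝ → ℝ)
    (hpos : ∀ t : ℝ, 0 ≤ t → 0 < H t)
    (hderiv : ∀ t : ℝ, 0 ≤ t →
      HasDerivWithinAt (fun s => (H s)⁻¹) (v' t) (Set.Ici 0) t)
    (h0 : (n : ℝ) * Λ < (H 0) ^ 2)
    (hineq : ∀ t : ℝ, 0 ≤ t →
      v' t ≤ -(1 / n) * (H t)⁻¹ + Λ * ((H t)⁻¹) ^ 3) :
    ∃ c₀ : ℝ, 0 < c₀ ∧ ∀ t : ℝ, 0 ≤ t → c₀ * Real.exp (t / n) ≤ H t := by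
  have npos : (0:ℝ) < n := by exact_mod_cast hn
  have hvpos : ∀ t : ℝ, 0 ≤ t → 0 < (H t)⁻¹ := fun t ht => inv_pos.2 (hpos t ht)
  obtain ⟨v0, hv0def⟩ : ∃ x : ℝ, x = (H 0)⁻¹ := ⟨_, rfl⟩
  have hv0 : 0 < v0 := hv0def ▸ hvpos 0 le_rfl
  have hH0 : 0 < H 0 := hpos 0 le_rfl
  have key : Λ * v0 ^ 2 < 1 / n := by
    have h1 : Λ * v0 ^ 2 = Λ / (H 0) ^ 2 := by rw [hv0def]; field_simp
    rw [h1, div_lt_div_iff₀ (by positivity) npos]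
    nlinarith
  obtain ⟨ε, hεdef⟩ : ∃ x : ℝ, x = 1 / (n:ℝ) - Λ * v0 ^ 2 := ⟨_, rfl⟩
  have hε : 0 < ε := by rw [hεdef]; linarith
  obtain ⟨δ, hδdef⟩ : ∃ x : ℝ, x = min 1 (ε / (4 * Λ * (2 * v0 + 1))) := ⟨_, rfl⟩
  have hδ : 0 < δ := hδdef ▸ lt_min one_pos (by positivity)
  have hδ1 : δ ≤ 1 := hδdef ▸ min_le_left _ _
  have hδ2 : δ ≤ ε / (4 * Λ * (2 * v0 + 1)) := hδdef ▸ min_le_right _ _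
  obtain ⟨M, hMdef⟩ : ∃ x : ℝ, x = v0 + δ := ⟨_, rfl⟩
  have hM : 0 < M := by rw [hMdef]; positivity
  have keyM : Λ * M ^ 2 - 1 / n < -ε / 2 := by
    have hd : δ * (4 * Λ * (2 * v0 + 1)) ≤ ε :=
      (le_div_iff₀ (by positivity)).1 hδ2
    have h2 : M ^ 2 - v0 ^ 2 = δ * (2 * v0 + δ) := by rw [hMdef]; ring
    have h3 : δ * (2 * v0 + δ) ≤ δ * (2 * v0 + 1) :=
      mul_le_mul_of_nonneg_left (by linarith) hδ.le
    have h4 : Λ * (δ * (2 * v0 + 1)) ≤ ε / 4 := by nlinarith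
    rw [hεdef]
    rw [hεdef] at h4
    nlinarith
  have hineq' : ∀ t, 0 ≤ t → v' t ≤ (H t)⁻¹ * (Λ * ((H t)⁻¹) ^ 2 - 1 / n) := by
    intro t ht
    calc v' t ≤ -(1 / n) * (H t)⁻¹ + Λ * ((H t)⁻¹) ^ 3 := hineq t ht
      _ = (H t)⁻¹ * (Λ * ((H t)⁻¹) ^ 2 - 1 / n) := by ring
  -- Step A : (H t)⁻¹ ≤ M * exp (-(ε/2) * t)
  have hlinA : ∀ x : ℝ, HasDerivAt (fun y : ℝ => -(ε / 2) * y) (-(ε / 2)) x := fun x => by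
    simpa using (hasDerivAt_id x).const_mul (-(ε / 2))
  have hA : ∀ t, 0 ≤ t → (H t)⁻¹ ≤ M * Real.exp (-(ε / 2) * t) := by
    apply fence_Ici (f' := v')
      (B' := fun x => M * (Real.exp (-(ε / 2) * x) * -(ε / 2)))
    · exact fun x hx => hderiv x hx
    · exact fun x => ((hlinA x).exp.const_mul M)
    · rw [mul_zero, Real.exp_zero, mul_one, ← hv0def, hMdef]; linarith
    · intro x hx hcontact
      have hvx : 0 < (H x)⁻¹ := hvpos x hx
      have hexple : Real.exp (-(ε / 2) * x) ≤ 1 :=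
        Real.exp_le_one_iff.2 (by nlinarith)
      have hle : (H x)⁻¹ ≤ M := by rw [hcontact]; nlinarith
      have hsq : ((H x)⁻¹) ^ 2 ≤ M ^ 2 := by nlinarith
      have h1 : Λ * ((H x)⁻¹) ^ 2 - 1 / n < -ε / 2 := by
        nlinarith [mul_le_mul_of_nonneg_left hsq hΛ.le]
      have h3 : (H x)⁻¹ * (Λ * ((H x)⁻¹) ^ 2 - 1 / n) < (H x)⁻¹ * (-ε / 2) :=
        mul_lt_mul_of_pos_left h1 hvx
      have h4 : (H x)⁻¹ * (-ε / 2) = M * (Real.exp (-(ε / 2) * x) * -(ε / 2)) := by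
        rw [hcontact]; ring
      linarith [hineq' x hx]
  -- Step B
  obtain ⟨K, hKdef⟩ : ∃ x : ℝ, x = Λ * (M ^ 2 + 1) := ⟨_, rfl⟩
  have hK : 0 < K := by rw [hKdef]; positivity
  obtain ⟨g, hgdef⟩ : ∃ g : ℝ → ℝ,
      g = fun t => K / ε * (1 - Real.exp (-ε * t)) - t / n := ⟨_, rfl⟩
  have hlinB : ∀ x : ℝ, HasDerivAt (fun y : ℝ => -ε * y) (-ε) x := fun x => by
    simpa using (hasDerivAt_id x).const_mul (-ε)
  have hg : ∀ x, HasDerivAt g (K * Real.exp (-ε * x) - 1 / n) x := by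
    intro x
    rw [hgdef]
    have h1 : HasDerivAt (fun y => K / ε * (1 - Real.exp (-ε * y)))
        (K / ε * -(Real.exp (-ε * x) * -ε)) x := ((hlinB x).exp.const_sub 1).const_mul _
    have h2 : HasDerivAt (fun y : ℝ => y / (n:ℝ)) (1 / n) x := by
      simpa using (hasDerivAt_id x).div_const (n:ℝ)
    have h3 := h1.sub h2
    have he : K / ε * -(Real.exp (-ε * x) * -ε) = K * Real.exp (-ε * x) := by
      field_simp
    rwa [he] at h3
  have hB : ∀ t, 0 ≤ t → (H t)⁻¹ ≤ M * Real.exp (g t) := by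
    apply fence_Ici (f' := v')
      (B' := fun x => M * (Real.exp (g x) * (K * Real.exp (-ε * x) - 1 / n)))
    · exact fun x hx => hderiv x hx
    · exact fun x => (hg x).exp.const_mul M
    · have hg0 : g 0 = 0 := by rw [hgdef]; simp
      rw [hg0, Real.exp_zero, mul_one, ← hv0def, hMdef]; linarith
    · intro x hx hcontact
      have hvx : 0 < (H x)⁻¹ := hvpos x hx
      have hAx := hA x hx
      have hexp : Real.exp (-(ε / 2) * x) ^ 2 = Real.exp (-ε * x) := by
        rw [sq, ← Real.exp_add]; ring_nf
      have h1 : Λ * ((H x)⁻¹) ^ 2 < K * Real.exp (-ε * x) := by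
        have h1a : Λ * ((H x)⁻¹) ^ 2 ≤ Λ * M ^ 2 * Real.exp (-ε * x) := by
          have hv2 : ((H x)⁻¹) ^ 2 ≤ (M * Real.exp (-(ε / 2) * x)) ^ 2 :=
            pow_le_pow_left₀ hvx.le hAx 2
          have : (M * Real.exp (-(ε / 2) * x)) ^ 2 = M ^ 2 * Real.exp (-ε * x) := by
            rw [mul_pow, hexp]
          rw [this] at hv2
          nlinarith [mul_le_mul_of_nonneg_left hv2 hΛ.le]
        have h1b : Λ * M ^ 2 * Real.exp (-ε * x) < K * Real.exp (-ε * x) := by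
          have : Λ * M ^ 2 < K := by rw [hKdef]; nlinarith
          exact mul_lt_mul_of_pos_right this (Real.exp_pos _)
        linarith
      have h3 : (H x)⁻¹ * (Λ * ((H x)⁻¹) ^ 2 - 1 / n)
          < (H x)⁻¹ * (K * Real.exp (-ε * x) - 1 / n) :=
        mul_lt_mul_of_pos_left (by linarith) hvx
      have h4 : (H x)⁻¹ * (K * Real.exp (-ε * x) - 1 / n)
          = M * (Real.exp (g x) * (K * Real.exp (-ε * x) - 1 / n)) := by
        rw [hcontact]; ring
      linarith [hineq' x hx]
  -- conclude
  obtain ⟨C, hCdef⟩ : ∃ x : ℝ, x = M * Real.exp (K / ε) := ⟨_, rfl⟩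
  have hC : 0 < C := by rw [hCdef]; positivity
  refine ⟨C⁻¹, inv_pos.2 hC, fun t ht => ?_⟩
  have hbound : (H t)⁻¹ ≤ C * Real.exp (-(t / n)) := by
    have h1 : g t ≤ K / ε - t / n := by
      have h2 : K / ε * (1 - Real.exp (-ε * t)) ≤ K / ε := by
        nlinarith [Real.exp_pos (-ε * t), div_pos hK hε]
      rw [hgdef]; dsimp only; linarith
    calc (H t)⁻¹ ≤ M * Real.exp (g t) := hB t ht
      _ ≤ M * Real.exp (K / ε - t / n) :=
        mul_le_mul_of_nonneg_left (Real.exp_le_exp.2 h1) hM.le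
      _ = C * Real.exp (-(t / n)) := by
        rw [hCdef, Real.exp_sub, Real.exp_neg]; field_simp
  have hvt : 0 < (H t)⁻¹ := hvpos t ht
  have hinv : (C * Real.exp (-(t / n)))⁻¹ ≤ ((H t)⁻¹)⁻¹ :=
    inv_anti₀ hvt hbound
  rw [inv_inv] at hinv
  have heq2 : (C * Real.exp (-(t / n)))⁻¹ = C⁻¹ * Real.exp (t / n) := by
    rw [mul_inv, Real.exp_neg, inv_inv]
  rw [heq2] at hinv
  exact hinv
end

section
/- Let n ≥ 1 be a natural number, let Λ > 0, and let H₀ > √(nΛ). Let T > 0 and let y : [0,T) → ℝ be differentiable with y(0) ≥ H₀ and y'(t) ≥ y(t)²/n - Λ for all t ∈ [0,T). Then T ≤ n·H₀/(H₀² - n·Λ). -/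
open Set

/-- Riccati blow-up estimate, Theorem 3.1 /
Anderson–Galloway.  Let `n ≥ 1`, `Λ > 0` and `H₀ > √(nΛ)`.  Let `T > 0` and
let `y : [0,T) → ℝ` be differentiable with `y(0) ≥ H₀` and
`y'(t) ≥ y(t)²/n - Λ` on `[0,T)`.  Then `T ≤ n·H₀/(H₀² - nΛ)`. -/
theorem stmt8 (n : ℕ) (hn : 1 ≤ n) (Λ H₀ : ℝ) (hΛ : 0 < Λ)
    (hH₀ : Real.sqrt (n * Λ) < H₀) (T : ℝ) (hT : 0 < T) (y y' : ℝ → ℝ)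
    (hderiv : ∀ t : ℝ, 0 ≤ t → t < T →
      HasDerivWithinAt y (y' t) (Set.Ico 0 T) t)
    (hy0 : H₀ ≤ y 0)
    (hineq : ∀ t : ℝ, 0 ≤ t → t < T → (y t) ^ 2 / n - Λ ≤ y' t) :
    T ≤ n * H₀ / (H₀ ^ 2 - n * Λ) := by
  have hn0 : (0:ℝ) < n := by exact_mod_cast hn
  have hnΛ : 0 ≤ (n:ℝ) * Λ := by positivity
  have hH₀pos : 0 < H₀ := lt_of_le_of_lt (Real.sqrt_nonneg _) hH₀
  have hsq : (n:ℝ) * Λ < H₀ ^ 2 := by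
    have := Real.sq_sqrt hnΛ
    nlinarith [Real.sqrt_nonneg ((n:ℝ)*Λ)]
  -- derivatives within Ici
  have hderiv' : ∀ x ∈ Ico (0:ℝ) T, HasDerivWithinAt y (y' x) (Ici x) x := by
    intro x hx
    refine (hderiv x hx.1 hx.2).mono_of_mem_nhdsWithin ?_
    have : Ici x ∩ Iio T ∈ nhdsWithin x (Ici x) :=
      Filter.inter_mem self_mem_nhdsWithin (Filter.mem_inf_of_left (Iio_mem_nhds hx.2))
    exact Filter.mem_of_superset this (fun s hs => ⟨le_trans hx.1 hs.1, hs.2⟩)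
  have hcont : ∀ t, 0 ≤ t → t < T → ContinuousOn y (Icc 0 t) := by
    intro t ht0 htT s hs
    exact ((hderiv s hs.1 (lt_of_le_of_lt hs.2 htT)).continuousWithinAt).mono
      (fun u hu => ⟨hu.1, lt_of_le_of_lt hu.2 htT⟩)
  -- Step 1: y stays ≥ H₀ on [0, T)
  have hlow : ∀ t, 0 ≤ t → t < T → H₀ ≤ y t := by
    intro t ht0 htT
    have key := image_le_of_deriv_right_lt_deriv_boundary (f := fun s => -y s)
      (f' := fun s => -y' s) (a := 0) (b := t)
      ((hcont t ht0 htT).neg)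
      (fun x hx => ((hderiv' x ⟨hx.1, lt_of_lt_of_le hx.2 htT.le⟩).neg))
      (B := fun _ => -H₀) (B' := fun _ => 0)
      (by simpa using hy0)
      (fun x => hasDerivAt_const x (-H₀))
      (by
        intro x hx hxe
        have hxT : x < T := lt_of_lt_of_le hx.2 htT.le
        have h1 := hineq x hx.1 hxT
        have hyx : y x = H₀ := by linarith [neg_injective hxe]
        have : 0 < y' x := by
          rw [hyx] at h1
          have : 0 < H₀ ^ 2 / n - Λ := by
            rw [sub_pos, lt_div_iff₀ hn0] at *
            nlinarith
          linarith
        show -y' x < 0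
        linarith)
    have := key (right_mem_Icc.2 ht0)
    simpa using this
  -- Step 2: slope bound via G t = k t + 1/(y t)
  set k : ℝ := (H₀ ^ 2 - n * Λ) / (n * H₀ ^ 2) with hk
  have hkpos : 0 < k := by
    apply div_pos (by linarith) (by positivity)
  have hbound : ∀ t, 0 ≤ t → t < T → t ≤ n * H₀ / (H₀ ^ 2 - n * Λ) := by
    intro t ht0 htT
    have hypos : ∀ s, 0 ≤ s → s < T → 0 < y s := fun s h1 h2 =>
      lt_of_lt_of_le hH₀pos (hlow s h1 h2)
    have key := image_le_of_deriv_right_le_deriv_boundary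
      (f := fun s => k * s + (y s)⁻¹)
      (f' := fun s => k + (-(y' s) / (y s) ^ 2)) (a := 0) (b := t)
      (B := fun _ => (y 0)⁻¹) (B' := fun _ => 0)
      (by
        apply ContinuousOn.add (by fun_prop)
        exact ContinuousOn.inv₀ (hcont t ht0 htT)
          (fun s hs => ne_of_gt (hypos s hs.1 (lt_of_le_of_lt hs.2 htT))))
      (by
        intro x hx
        have hxT : x < T := lt_of_lt_of_le hx.2 htT.le
        have h1 : HasDerivWithinAt (fun s => k * s) k (Ici x) x := by
          simpa using ((hasDerivAt_id x).const_mul k).hasDerivWithinAt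
        exact h1.add ((hderiv' x ⟨hx.1, hxT⟩).inv (ne_of_gt (hypos x hx.1 hxT))))
      (by simp)
      (continuousOn_const)
      (fun x hx => hasDerivWithinAt_const x _ _)
      (by
        intro x hx
        have hxT : x < T := lt_of_lt_of_le hx.2 htT.le
        have hy1 : H₀ ≤ y x := hlow x hx.1 hxT
        have hy2 : 0 < y x := lt_of_lt_of_le hH₀pos hy1
        have h1 := hineq x hx.1 hxT
        -- need k + (-(y' x) / (y x)^2) ≤ 0, i.e. k ≤ y' x / (y x)^2
        rw [← sub_nonpos]
        have h2 : (y x) ^ 2 / n - Λ ≤ y' x := h1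
        have h3 : k * (y x) ^ 2 ≤ y' x := by
          have hkle : k * (y x) ^ 2 ≤ (y x) ^ 2 / n - Λ := by
            rw [hk, div_mul_eq_mul_div, div_le_iff₀ (by positivity)]
            have hc : (y x) ^ 2 / n * (n:ℝ) = (y x) ^ 2 :=
              div_mul_cancel₀ _ (ne_of_gt hn0)
            have hsq2 : H₀ * H₀ ≤ y x * y x :=
              mul_le_mul hy1 hy1 hH₀pos.le (by linarith)
            nlinarith [mul_pos hn0 hΛ, hc, hsq2]
          linarith
        have hkd : k ≤ y' x / (y x) ^ 2 := by
          rw [le_div_iff₀ (by positivity)]; linarith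
        show k + -y' x / y x ^ 2 - 0 ≤ 0
        rw [neg_div]
        linarith)
    have h4 := key (right_mem_Icc.2 ht0)
    -- k t + 1/(y t) ≤ 1/(y 0); so k t ≤ 1/(y 0) ≤ 1/H₀
    have hy0pos : 0 < y 0 := lt_of_lt_of_le hH₀pos hy0
    have hytpos : 0 < y t := lt_of_lt_of_le hH₀pos (hlow t ht0 htT)
    have h5 : k * t ≤ (y 0)⁻¹ := by
      have : 0 < (y t)⁻¹ := by positivity
      linarith
    have h6 : k * t ≤ H₀⁻¹ := le_trans h5 (by
      apply inv_anti₀ hH₀pos hy0)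
    -- t ≤ 1/(k H₀) = n H₀ / (H₀² - nΛ)
    have hkk : k * (k * H₀)⁻¹ = H₀⁻¹ := by
      field_simp
    have h7 : t ≤ (k * H₀)⁻¹ :=
      le_of_mul_le_mul_left (by rw [hkk]; exact h6) hkpos
    have hne : H₀ ^ 2 - (n:ℝ) * Λ ≠ 0 := by nlinarith
    have heq : (k * H₀)⁻¹ = n * H₀ / (H₀ ^ 2 - n * Λ) := by
      rw [hk]
      field_simp
    rw [heq] at h7
    linarith
  by_contra h
  push_neg at h
  have hM : 0 ≤ n * H₀ / (H₀ ^ 2 - n * Λ) :=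
    div_nonneg (by positivity) (by linarith)
  have := hbound ((T + n * H₀ / (H₀ ^ 2 - n * Λ)) / 2) (by linarith) (by linarith)
  linarith
end
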